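/- Let p ≥ 2 be an integer, H ∈ (0, 1 − 1/(2p)) and r ∈ {0,1,…,p−1}. Then there exists a constant C > 0 such that for every N ≥ 1, (1/N) · Σ_{k,l=1}^{N} |ρ_H(k−l)|^r · |ρ_H(k−1)|^{p−r} · |ρ_H(l−1)|^{p−r} ≤ C · (N^{−1} + N^{2H−2}). -/

import Mathlib

/-!
The bound `|ρ_H(v)| ≤ c (|v| + 1)^{-u}` with `u = 2 - 2H` comes from writing `ρ_H` as a second
difference of `t ↦ t^{2H}`. Bounding `|ρ_H(k-1)|^{p-r} |ρ_H(l-1)|^{p-r}` by the mean of the squares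
(a Schur test) reduces the double sum to the product of the power sums `∑_{j ≤ N} j^{-ru}` and
`∑_{j ≤ N} j^{-2(p-r)u}`; since `pu > 1`, the exponents `ru` and `2(p-r)u` add up to more than
`1 + u`, which makes this product `O(1 + N^{1-u})`. For `r = 0` the double sum is the square of a convergent sum.
-/

open Filter Topology

/-- The autocovariance function of fractional Gaussian noise with Hurst index `H`:
`ρ_H(v) = ½(|v+1|^{2H} + |v−1|^{2H} − 2|v|^{2H})`. -/
noncomputable def rhoFGN (H : ℝ) (v : ℤ) : ℝ :=
  (|(v : ℝ) + 1| ^ (2 * H) + |(v : ℝ) - 1| ^ (2 * H) - 2 * |(v : ℝ)| ^ (2 * H)) / 2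

open Real Finset

theorem abs_rpow_add_one_sub_two_mul_rpow_add_rpow_sub_one_le {a x : ℝ} (ha : a ≤ 2) (hx : 1 < x) :
    |(x + 1) ^ a - 2 * x ^ a + (x - 1) ^ a| ≤ |a * (a - 1)| * (x - 1) ^ (a - 2) := by
  have hpow : ∀ b t : ℝ, 0 < t → HasDerivAt (fun t : ℝ => t ^ b) (b * t ^ (b - 1)) t :=
    fun b t ht => hasDerivAt_rpow_const (Or.inl ht.ne')
  have hdiff : ∀ t : ℝ, 0 < t → HasDerivAt (fun t : ℝ => (t + 1) ^ a - t ^ a)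
      (a * (t + 1) ^ (a - 1) - a * t ^ (a - 1)) t := fun t ht =>
    (((hasDerivAt_id t).add_const 1).rpow_const (Or.inl (by simp; linarith))).sub (hpow a t ht)
      |>.congr_deriv (by simp)
  obtain ⟨ξ, ⟨hξl, hξr⟩, hξ⟩ := exists_hasDerivAt_eq_slope _ _ (by linarith : x - 1 < x)
    (fun t ht => (hdiff t (by linarith [ht.1])).continuousAt.continuousWithinAt)
    (fun t ht => hdiff t (by linarith [ht.1]))
  obtain ⟨η, ⟨hηl, hηr⟩, hη⟩ := exists_hasDerivAt_eq_slope _ _ (by linarith : ξ < ξ + 1)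
    (fun t ht => (hpow (a - 1) t (by linarith [ht.1])).continuousAt.continuousWithinAt)
    (fun t ht => hpow (a - 1) t (by linarith [ht.1]))
  have hsecond : (x + 1) ^ a - 2 * x ^ a + (x - 1) ^ a = a * (a - 1) * η ^ (a - 1 - 1) := by
    simp only [sub_sub_cancel, div_one, add_sub_cancel_left, sub_add_cancel] at hξ hη
    rw [mul_assoc, hη, mul_sub]; linarith
  rw [hsecond, abs_mul, abs_of_pos (rpow_pos_of_pos (by linarith) _), sub_sub, one_add_one_eq_two]
  exact mul_le_mul_of_nonneg_left
    (rpow_le_rpow_of_nonpos (by linarith) (by linarith) (by linarith)) (abs_nonneg _)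

theorem rhoFGN_neg (H : ℝ) (v : ℤ) : rhoFGN H (-v) = rhoFGN H v := by
  have h₁ : |(-(v : ℝ)) + 1| = |(v : ℝ) - 1| := by rw [← abs_neg]; ring_nf
  have h₂ : |(-(v : ℝ)) - 1| = |(v : ℝ) + 1| := by rw [← abs_neg]; ring_nf
  simp only [rhoFGN, Int.cast_neg, abs_neg, h₁, h₂]
  ring

theorem rhoFGN_natAbs (H : ℝ) (v : ℤ) : rhoFGN H v.natAbs = rhoFGN H v := by
  obtain ⟨n, rfl | rfl⟩ := Int.eq_nat_or_neg v <;> simp [rhoFGN_neg]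

theorem rhoFGN_zero {H : ℝ} (hH : 0 < H) : rhoFGN H 0 = 1 := by
  simp [rhoFGN, zero_rpow (by positivity : 2 * H ≠ 0)]

theorem rhoFGN_one {H : ℝ} (hH : 0 < H) : rhoFGN H 1 = (2 ^ (2 * H) - 2) / 2 := by
  norm_num [rhoFGN, zero_rpow (by positivity : 2 * H ≠ 0)]

theorem rhoFGN_natCast {H : ℝ} {n : ℕ} (hn : 1 ≤ n) :
    rhoFGN H n =
      (((n : ℝ) + 1) ^ (2 * H) - 2 * (n : ℝ) ^ (2 * H) + ((n : ℝ) - 1) ^ (2 * H)) / 2 := by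
  have : (1 : ℝ) ≤ n := by exact_mod_cast hn
  simp only [rhoFGN, Int.cast_natCast]
  rw [abs_of_nonneg (by linarith), abs_of_nonneg (by linarith), abs_of_nonneg (by linarith)]
  ring

theorem abs_rhoFGN_natCast_le {H : ℝ} (hH0 : 0 < H) (hH1 : H < 1) {n : ℕ} (hn : 2 ≤ n) :
    |rhoFGN H n| ≤ ((n : ℝ) - 1) ^ (2 * H - 2) := by
  have hn1 : (2 : ℝ) ≤ n := by exact_mod_cast hn
  have hsecond := abs_rpow_add_one_sub_two_mul_rpow_add_rpow_sub_one_le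
    (a := 2 * H) (x := n) (by linarith) (by linarith)
  have hcoef : |2 * H * (2 * H - 1)| ≤ 2 := by
    rw [abs_mul, abs_of_pos (by linarith)]
    nlinarith [abs_le.mpr (⟨by linarith, by linarith⟩ : -1 ≤ 2 * H - 1 ∧ 2 * H - 1 ≤ 1)]
  rw [rhoFGN_natCast (by omega), abs_div, abs_two]
  nlinarith [rpow_nonneg (by linarith : (0 : ℝ) ≤ n - 1) (2 * H - 2)]

theorem abs_rhoFGN_le {H : ℝ} (hH0 : 0 < H) (hH1 : H < 1) (v : ℤ) :
    |rhoFGN H v| ≤ 9 * ((v.natAbs + 1 : ℕ) : ℝ) ^ (2 * H - 2) := by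
  rw [← rhoFGN_natAbs]
  generalize v.natAbs = n
  push_cast
  rcases le_or_gt n 1 with hn | hn
  · have hρ : |rhoFGN H n| ≤ 1 := by
      interval_cases n
      · simp [rhoFGN_zero hH0]
      · have h1 : (1 : ℝ) ≤ 2 ^ (2 * H) := one_le_rpow (by norm_num) (by positivity)
        have h4 : (2 : ℝ) ^ (2 * H) ≤ 2 ^ (2 : ℝ) :=
          rpow_le_rpow_of_exponent_le (by norm_num) (by linarith)
        norm_num at h4
        simp only [Nat.cast_one, rhoFGN_one hH0]
        rw [abs_le]; constructor <;> linarith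
    have hquarter : (2 : ℝ) ^ (-2 : ℝ) ≤ ((n : ℝ) + 1) ^ (2 * H - 2) :=
      calc (2 : ℝ) ^ (-2 : ℝ) ≤ 2 ^ (2 * H - 2) :=
            rpow_le_rpow_of_exponent_le (by norm_num) (by linarith)
        _ ≤ ((n : ℝ) + 1) ^ (2 * H - 2) :=
          rpow_le_rpow_of_nonpos (by positivity) (by exact_mod_cast (by omega : n + 1 ≤ 2))
            (by linarith)
    norm_num at hquarter
    linarith
  · have hn1 : (2 : ℝ) ≤ n := by exact_mod_cast hn
    have h3 : (3 : ℝ) ^ (-2 : ℝ) ≤ 3 ^ (2 * H - 2) :=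
      rpow_le_rpow_of_exponent_le (by norm_num) (by linarith)
    have hle : (3 * ((n : ℝ) - 1)) ^ (2 * H - 2) ≤ ((n : ℝ) + 1) ^ (2 * H - 2) :=
      rpow_le_rpow_of_nonpos (by positivity) (by linarith) (by linarith)
    rw [mul_rpow (by norm_num) (by linarith)] at hle
    norm_num at h3
    nlinarith [abs_rhoFGN_natCast_le hH0 hH1 hn,
      rpow_nonneg (by linarith : (0 : ℝ) ≤ n - 1) (2 * H - 2)]

theorem rhoFGN_half_of_ne_zero {v : ℤ} (hv : v ≠ 0) : rhoFGN (1 / 2) v = 0 := by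
  rw [← rhoFGN_natAbs, rhoFGN_natCast (Int.natAbs_pos.mpr hv)]
  norm_num
  ring

-- At `H = 1/2` the covariance vanishes off `0`, so the critical rate `u = 1` can be traded
-- for `3/2`.
theorem exists_abs_rhoFGN_le {H : ℝ} (hH0 : 0 < H) (hH1 : H < 1) :
    ∃ u c : ℝ, 2 - 2 * H ≤ u ∧ u ≠ 1 ∧
      ∀ v, |rhoFGN H v| ≤ c * ((v.natAbs + 1 : ℕ) : ℝ) ^ (-u) := by
  by_cases hH : H = 1 / 2
  · subst hH
    refine ⟨3 / 2, 1, by norm_num, by norm_num, fun v => ?_⟩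
    rcases eq_or_ne v 0 with rfl | hv
    · simp [rhoFGN_zero]
    · rw [rhoFGN_half_of_ne_zero hv, abs_zero]
      positivity
  · refine ⟨2 - 2 * H, 9, le_rfl, fun h => hH (by linarith), fun v => ?_⟩
    rw [neg_sub]
    exact abs_rhoFGN_le hH0 hH1 v

theorem mul_rpow_sub_one_le_rpow_sub_rpow {δ x : ℝ} (hδ0 : 0 ≤ δ) (hδ1 : δ ≤ 1) (hx : 1 ≤ x) :
    δ * x ^ (δ - 1) ≤ x ^ δ - (x - 1) ^ δ := by
  have hx0 : 0 < x := by linarith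
  have hbern := rpow_one_add_le_one_add_mul_self (s := -x⁻¹)
    (by linarith [inv_le_one_of_one_le₀ hx]) hδ0 hδ1
  have hsplit : (x - 1) ^ δ = (1 + -x⁻¹) ^ δ * x ^ δ := by
    rw [← mul_rpow (by linarith [inv_le_one_of_one_le₀ hx]) hx0.le]
    congr 1; field_simp; ring
  rw [hsplit, rpow_sub_one hx0.ne']
  have := mul_le_mul_of_nonneg_right hbern (rpow_nonneg hx0.le δ)
  have e : (1 + δ * -x⁻¹) * x ^ δ = x ^ δ - δ * (x ^ δ / x) := by field_simp; ring
  linarith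

theorem sum_Icc_rpow_sub_one_le {δ : ℝ} (hδ0 : 0 < δ) (hδ1 : δ ≤ 1) (N : ℕ) :
    ∑ j ∈ Icc 1 N, (j : ℝ) ^ (δ - 1) ≤ (N : ℝ) ^ δ / δ := by
  induction N with
  | zero => simp [zero_rpow hδ0.ne']
  | succ n ih =>
    rw [sum_Icc_succ_top (by omega), le_div_iff₀ hδ0, add_mul]
    have hstep := mul_rpow_sub_one_le_rpow_sub_rpow hδ0.le hδ1
      (by exact_mod_cast Nat.le_add_left 1 n : (1 : ℝ) ≤ ((n + 1 : ℕ) : ℝ))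
    rw [le_div_iff₀ hδ0] at ih
    push_cast at hstep ⊢
    simp only [add_sub_cancel_right] at hstep
    linarith

theorem exists_sum_Icc_rpow_neg_le {γ δ : ℝ} (hδ0 : 0 ≤ δ) (hδ1 : δ ≤ 1) (hγδ : 1 - γ ≤ δ)
    (h : 0 < δ ∨ 1 < γ) :
    ∃ C, 0 ≤ C ∧ ∀ N : ℕ, 1 ≤ N → ∑ j ∈ Icc 1 N, (j : ℝ) ^ (-γ) ≤ C * (N : ℝ) ^ δ := by
  rcases h with hδ | hγ
  · refine ⟨1 / δ, by positivity, fun N _ => ?_⟩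
    calc ∑ j ∈ Icc 1 N, (j : ℝ) ^ (-γ) ≤ ∑ j ∈ Icc 1 N, (j : ℝ) ^ (δ - 1) := by
          gcongr with j hj
          · exact Nat.one_le_cast.mpr (mem_Icc.mp hj).1
          · linarith
      _ ≤ 1 / δ * (N : ℝ) ^ δ := by
          rw [one_div_mul_eq_div]; exact sum_Icc_rpow_sub_one_le hδ hδ1 N
  · have hs : Summable (fun j : ℕ => (j : ℝ) ^ (-γ)) := summable_nat_rpow.mpr (by linarith)
    refine ⟨∑' j : ℕ, (j : ℝ) ^ (-γ), tsum_nonneg fun j => by positivity, fun N hN => ?_⟩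
    calc ∑ j ∈ Icc 1 N, (j : ℝ) ^ (-γ) ≤ ∑' j : ℕ, (j : ℝ) ^ (-γ) :=
          hs.sum_le_tsum _ fun j _ => by positivity
      _ ≤ (∑' j : ℕ, (j : ℝ) ^ (-γ)) * (N : ℝ) ^ δ :=
          le_mul_of_one_le_right (tsum_nonneg fun j => by positivity)
            (one_le_rpow (by exact_mod_cast hN) hδ0)

theorem exists_sum_Icc_rpow_neg_mul_sum_Icc_rpow_neg_le {u α β : ℝ} (hu0 : 0 < u) (hu1 : u ≠ 1)
    (hα : u ≤ α) (hβ : u ≤ β) (hαβ : 1 + u < α + β) :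
    ∃ C, 0 ≤ C ∧ ∀ N : ℕ, 1 ≤ N →
      (∑ j ∈ Icc 1 N, (j : ℝ) ^ (-α)) * ∑ j ∈ Icc 1 N, (j : ℝ) ^ (-β)
        ≤ C * (1 + (N : ℝ) ^ (1 - u)) := by
  obtain ⟨δ, δ', ⟨hδ0, hδ1, hαδ, hδ⟩, ⟨hδ'0, hδ'1, hβδ', hδ'⟩, hsum⟩ :
      ∃ δ δ' : ℝ, (0 ≤ δ ∧ δ ≤ 1 ∧ 1 - α ≤ δ ∧ (0 < δ ∨ 1 < α)) ∧
        (0 ≤ δ' ∧ δ' ≤ 1 ∧ 1 - β ≤ δ' ∧ (0 < δ' ∨ 1 < β)) ∧ δ + δ' ≤ max 0 (1 - u) := by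
    rcases lt_or_gt_of_ne hu1 with hu | hu
    · have hmax : 1 - u ≤ max 0 (1 - u) := le_max_right _ _
      by_cases hα1 : 1 < α
      · exact ⟨0, 1 - u, ⟨le_rfl, zero_le_one, by linarith, .inr hα1⟩,
          ⟨by linarith, by linarith, by linarith, .inl (by linarith)⟩, by linarith⟩
      by_cases hβ1 : 1 < β
      · exact ⟨1 - u, 0, ⟨by linarith, by linarith, by linarith, .inl (by linarith)⟩,
          ⟨le_rfl, zero_le_one, by linarith, .inr hβ1⟩, by linarith⟩
      -- both sums diverge: split the excess `α + β - (1 + u)` evenly between them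
      exact ⟨1 - α + (α + β - 1 - u) / 2, 1 - β + (α + β - 1 - u) / 2,
        ⟨by linarith, by linarith, by linarith, .inl (by linarith)⟩,
        ⟨by linarith, by linarith, by linarith, .inl (by linarith)⟩, by linarith⟩
    · exact ⟨0, 0, ⟨le_rfl, zero_le_one, by linarith, .inr (by linarith)⟩,
        ⟨le_rfl, zero_le_one, by linarith, .inr (by linarith)⟩, by simp⟩
  obtain ⟨C, hC, hbound⟩ := exists_sum_Icc_rpow_neg_le hδ0 hδ1 hαδ hδ
  obtain ⟨C', hC', hbound'⟩ := exists_sum_Icc_rpow_neg_le hδ'0 hδ'1 hβδ' hδ'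
  refine ⟨C * C', by positivity, fun N hN => ?_⟩
  have hN1 : (1 : ℝ) ≤ N := by exact_mod_cast hN
  calc (∑ j ∈ Icc 1 N, (j : ℝ) ^ (-α)) * ∑ j ∈ Icc 1 N, (j : ℝ) ^ (-β)
      ≤ (C * (N : ℝ) ^ δ) * (C' * (N : ℝ) ^ δ') :=
        mul_le_mul (hbound N hN) (hbound' N hN) (sum_nonneg fun j _ => by positivity)
          (by positivity)
    _ = C * C' * (N : ℝ) ^ (δ + δ') := by rw [rpow_add (by linarith)]; ring
    _ ≤ C * C' * (1 + (N : ℝ) ^ (1 - u)) := by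
        gcongr
        calc (N : ℝ) ^ (δ + δ') ≤ (N : ℝ) ^ max 0 (1 - u) := rpow_le_rpow_of_exponent_le hN1 hsum
          _ ≤ 1 + (N : ℝ) ^ (1 - u) := by
            rcases max_choice 0 (1 - u) with h | h <;> rw [h]
            · simp; positivity
            · linarith

theorem sum_sum_mul_mul_le_of_sum_le {ι : Type*} (s : Finset ι) (K : ι → ι → ℝ) (a : ι → ℝ)
    {M : ℝ} (hK : ∀ i ∈ s, ∀ j ∈ s, 0 ≤ K i j) (hrow : ∀ i ∈ s, ∑ j ∈ s, K i j ≤ M)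
    (hcol : ∀ j ∈ s, ∑ i ∈ s, K i j ≤ M) :
    ∑ i ∈ s, ∑ j ∈ s, K i j * a i * a j ≤ M * ∑ i ∈ s, a i ^ 2 :=
  calc ∑ i ∈ s, ∑ j ∈ s, K i j * a i * a j
      ≤ ∑ i ∈ s, ∑ j ∈ s, (K i j * a i ^ 2 / 2 + K i j * a j ^ 2 / 2) := by
        gcongr with i hi j hj
        nlinarith [mul_nonneg (hK i hi j hj) (sq_nonneg (a i - a j))]
    _ = (∑ i ∈ s, a i ^ 2 * ∑ j ∈ s, K i j) / 2 + (∑ j ∈ s, a j ^ 2 * ∑ i ∈ s, K i j) / 2 := by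
        rw [sum_congr rfl fun i _ => sum_add_distrib, sum_add_distrib]
        congr 1
        · rw [sum_div]
          refine sum_congr rfl fun i _ => ?_
          rw [mul_sum, sum_div]
          exact sum_congr rfl fun j _ => by ring
        · rw [sum_comm, sum_div]
          refine sum_congr rfl fun j _ => ?_
          rw [mul_sum, sum_div]
          exact sum_congr rfl fun i _ => by ring
    _ ≤ (∑ i ∈ s, a i ^ 2 * M) / 2 + (∑ j ∈ s, a j ^ 2 * M) / 2 := by
        gcongr with i hi j hj
        · exact hrow i hi
        · exact hcol j hj
    _ = M * ∑ i ∈ s, a i ^ 2 := by rw [← sum_mul]; ring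

theorem sum_Icc_natAbs_sub_add_one_le (w : ℕ → ℝ) (hw : ∀ j, 0 ≤ w j) {N k : ℕ}
    (hk : k ∈ Icc 1 N) :
    ∑ l ∈ Icc 1 N, w (((k : ℤ) - l).natAbs + 1) ≤ 2 * ∑ j ∈ Icc 1 N, w j := by
  classical
  rw [sum_comp, mul_sum]
  have hfiber (j : ℕ) : #{l ∈ Icc 1 N | ((k : ℤ) - (l : ℕ)).natAbs + 1 = j} ≤ 2 := by
    refine (card_le_card (t := {k + 1 - j, k + j - 1}) fun l hl => ?_).trans card_le_two
    simp only [mem_filter, mem_Icc, mem_insert, mem_singleton] at hl ⊢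
    omega
  calc ∑ j ∈ (Icc 1 N).image (fun l : ℕ => ((k : ℤ) - l).natAbs + 1),
        #{l ∈ Icc 1 N | ((k : ℤ) - (l : ℕ)).natAbs + 1 = j} • w j
      ≤ ∑ j ∈ (Icc 1 N).image (fun l : ℕ => ((k : ℤ) - l).natAbs + 1), 2 * w j := by
        gcongr with j
        rw [nsmul_eq_mul]
        exact mul_le_mul_of_nonneg_right (by exact_mod_cast hfiber j) (hw j)
    _ ≤ ∑ j ∈ Icc 1 N, 2 * w j := by
        refine sum_le_sum_of_subset_of_nonneg (fun j hj => ?_) (fun j _ _ => by linarith [hw j])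
        simp only [mem_image, mem_Icc] at hj hk ⊢
        omega

theorem mul_rpow_neg_pow {c x : ℝ} (hx : 0 ≤ x) (u : ℝ) (n : ℕ) :
    (c * x ^ (-u)) ^ n = c ^ n * x ^ (-(n * u)) := by
  rw [mul_pow, ← rpow_natCast (x ^ (-u)), ← rpow_mul hx]; ring_nf

theorem abs_pow_le_of_abs_le {f : ℤ → ℝ} {c u : ℝ}
    (hf : ∀ v, |f v| ≤ c * ((v.natAbs + 1 : ℕ) : ℝ) ^ (-u)) (n : ℕ) {k : ℕ} (hk : 1 ≤ k) :
    |f ((k : ℤ) - 1)| ^ n ≤ c ^ n * (k : ℝ) ^ (-(n * u)) := by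
  have hk' : ((k : ℤ) - 1).natAbs + 1 = k := by omega
  have := pow_le_pow_left₀ (abs_nonneg _) (hf ((k : ℤ) - 1)) n
  rwa [hk', mul_rpow_neg_pow (Nat.cast_nonneg k)] at this

theorem sum_sum_abs_pow_mul_le {f : ℤ → ℝ} {c u : ℝ}
    (hf : ∀ v, |f v| ≤ c * ((v.natAbs + 1 : ℕ) : ℝ) ^ (-u)) (r q N : ℕ) :
    ∑ k ∈ Icc 1 N, ∑ l ∈ Icc 1 N,
        |f ((k : ℤ) - (l : ℤ))| ^ r * |f ((k : ℤ) - 1)| ^ q * |f ((l : ℤ) - 1)| ^ q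
      ≤ 2 * c ^ r * c ^ (2 * q) *
        ((∑ j ∈ Icc 1 N, (j : ℝ) ^ (-(r * u))) *
          ∑ j ∈ Icc 1 N, (j : ℝ) ^ (-((2 * q : ℕ) * u))) := by
  have hc : 0 ≤ c := by simpa using (abs_nonneg _).trans (hf 0)
  set w : ℕ → ℝ := fun j => (c * (j : ℝ) ^ (-u)) ^ r
  have hw (j : ℕ) : 0 ≤ w j := by positivity
  have hwindow {k l : ℕ} : |f ((k : ℤ) - l)| ^ r ≤ w (((k : ℤ) - l).natAbs + 1) :=
    pow_le_pow_left₀ (abs_nonneg _) (hf _) r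
  have hrow : ∀ k ∈ Icc 1 N, ∑ l ∈ Icc 1 N, |f ((k : ℤ) - l)| ^ r ≤ 2 * ∑ j ∈ Icc 1 N, w j :=
    fun k hk => (sum_le_sum fun l _ => hwindow).trans (sum_Icc_natAbs_sub_add_one_le w hw hk)
  have hcol : ∀ l ∈ Icc 1 N, ∑ k ∈ Icc 1 N, |f ((k : ℤ) - l)| ^ r ≤ 2 * ∑ j ∈ Icc 1 N, w j := by
    refine fun l hl => (sum_le_sum fun k _ => ?_).trans (sum_Icc_natAbs_sub_add_one_le w hw hl)
    rw [← Int.natAbs_neg, neg_sub]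
    exact hwindow
  calc _ ≤ (2 * ∑ j ∈ Icc 1 N, w j) * ∑ k ∈ Icc 1 N, (|f ((k : ℤ) - 1)| ^ q) ^ 2 :=
        sum_sum_mul_mul_le_of_sum_le _ _ _ (fun _ _ _ _ => by positivity) hrow hcol
    _ ≤ (2 * ∑ j ∈ Icc 1 N, w j) * ∑ k ∈ Icc 1 N, c ^ (2 * q) * (k : ℝ) ^ (-((2 * q : ℕ) * u)) := by
        gcongr with k hk
        rw [← pow_mul, mul_comm q]
        exact abs_pow_le_of_abs_le hf _ (mem_Icc.mp hk).1
    _ = _ := by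
        simp only [w, mul_rpow_neg_pow (Nat.cast_nonneg _), ← mul_sum]
        ring

theorem exists_sum_abs_pow_le {f : ℤ → ℝ} {c u : ℝ}
    (hf : ∀ v, |f v| ≤ c * ((v.natAbs + 1 : ℕ) : ℝ) ^ (-u)) {p : ℕ} (hpu : 1 < p * u) :
    ∃ C, 0 ≤ C ∧ ∀ N : ℕ, 1 ≤ N → ∑ k ∈ Icc 1 N, |f ((k : ℤ) - 1)| ^ p ≤ C := by
  have hc : 0 ≤ c := by simpa using (abs_nonneg _).trans (hf 0)
  obtain ⟨C, hC, hbound⟩ := exists_sum_Icc_rpow_neg_le (γ := p * u) le_rfl zero_le_one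
    (by linarith) (.inr hpu)
  refine ⟨c ^ p * C, by positivity, fun N hN => ?_⟩
  calc ∑ k ∈ Icc 1 N, |f ((k : ℤ) - 1)| ^ p
      ≤ ∑ k ∈ Icc 1 N, c ^ p * (k : ℝ) ^ (-(p * u)) :=
        sum_le_sum fun k hk => abs_pow_le_of_abs_le hf p (mem_Icc.mp hk).1
    _ ≤ c ^ p * C := by
        rw [← mul_sum]
        simpa using mul_le_mul_of_nonneg_left (hbound N hN) (by positivity : 0 ≤ c ^ p)

theorem exists_sum_abs_pow_mul_le {f : ℤ → ℝ} {c u : ℝ} (hu0 : 0 < u) (hu1 : u ≠ 1)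
    (hf : ∀ v, |f v| ≤ c * ((v.natAbs + 1 : ℕ) : ℝ) ^ (-u)) {p r : ℕ} (hpu : 1 < p * u)
    (hr : r < p) :
    ∃ C, 0 < C ∧ ∀ N : ℕ, 1 ≤ N →
      ∑ k ∈ Icc 1 N, ∑ l ∈ Icc 1 N,
          |f ((k : ℤ) - (l : ℤ))| ^ r * |f ((k : ℤ) - 1)| ^ (p - r) * |f ((l : ℤ) - 1)| ^ (p - r)
        ≤ C * (1 + (N : ℝ) ^ (1 - u)) := by
  suffices ∃ C, 0 ≤ C ∧ ∀ N : ℕ, 1 ≤ N →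
      ∑ k ∈ Icc 1 N, ∑ l ∈ Icc 1 N,
          |f ((k : ℤ) - (l : ℤ))| ^ r * |f ((k : ℤ) - 1)| ^ (p - r) * |f ((l : ℤ) - 1)| ^ (p - r)
        ≤ C * (1 + (N : ℝ) ^ (1 - u)) by
    obtain ⟨C, hC, hbound⟩ := this
    exact ⟨C + 1, by positivity, fun N hN => (hbound N hN).trans (by gcongr; linarith)⟩
  rcases Nat.eq_zero_or_pos r with rfl | hr0
  · obtain ⟨C, hC, hbound⟩ := exists_sum_abs_pow_le hf hpu
    refine ⟨C ^ 2, by positivity, fun N hN => ?_⟩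
    calc ∑ k ∈ Icc 1 N, ∑ l ∈ Icc 1 N,
          |f ((k : ℤ) - (l : ℤ))| ^ 0 * |f ((k : ℤ) - 1)| ^ (p - 0) * |f ((l : ℤ) - 1)| ^ (p - 0)
        = (∑ k ∈ Icc 1 N, |f ((k : ℤ) - 1)| ^ p) ^ 2 := by
          simp only [pow_zero, one_mul, Nat.sub_zero, sq, sum_mul_sum]
      _ ≤ C ^ 2 := pow_le_pow_left₀ (sum_nonneg fun _ _ => by positivity) (hbound N hN) 2
      _ ≤ C ^ 2 * (1 + (N : ℝ) ^ (1 - u)) :=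
          le_mul_of_one_le_right (by positivity)
            (by linarith [rpow_nonneg (Nat.cast_nonneg N) (1 - u)])
  · have hc : 0 ≤ c := by simpa using (abs_nonneg _).trans (hf 0)
    have hα : u ≤ r * u := le_mul_of_one_le_left hu0.le (by exact_mod_cast hr0)
    have hβ : u ≤ ((2 * (p - r) : ℕ) : ℝ) * u :=
      le_mul_of_one_le_left hu0.le (by exact_mod_cast (by omega : 1 ≤ 2 * (p - r)))
    have hαβ : 1 + u < r * u + ((2 * (p - r) : ℕ) : ℝ) * u := by
      have hm : (p : ℝ) + 1 ≤ r + ((2 * (p - r) : ℕ) : ℝ) := by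
        exact_mod_cast (by omega : p + 1 ≤ r + 2 * (p - r))
      nlinarith [mul_le_mul_of_nonneg_right hm hu0.le]
    obtain ⟨C, hC, hbound⟩ := exists_sum_Icc_rpow_neg_mul_sum_Icc_rpow_neg_le hu0 hu1 hα hβ hαβ
    refine ⟨2 * c ^ r * c ^ (2 * (p - r)) * C, by positivity, fun N hN => ?_⟩
    rw [mul_assoc _ C]
    exact (sum_sum_abs_pow_mul_le hf r (p - r) N).trans
      (mul_le_mul_of_nonneg_left (hbound N hN) (by positivity))

/-- For `p ≥ 2`, `H ∈ (0, 1 − 1/(2p))` and `r ∈ {0,1,…,p−1}`, there is a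
constant `C > 0` such that for every `N ≥ 1`,
`(1/N) Σ_{k,l=1}^{N} |ρ_H(k−l)|^r |ρ_H(k−1)|^{p−r} |ρ_H(l−1)|^{p−r} ≤ C (N^{−1} + N^{2H−2})`. -/
theorem stmt18 (p : ℕ) (hp : 2 ≤ p) (H : ℝ)
    (hH : H ∈ Set.Ioo (0 : ℝ) (1 - 1 / (2 * (p : ℝ))))
    (r : ℕ) (hr : r ≤ p - 1) :
    ∃ C : ℝ, 0 < C ∧ ∀ N : ℕ, 1 ≤ N →
      (1 / (N : ℝ)) *
        ∑ k ∈ Finset.Icc 1 N, ∑ l ∈ Finset.Icc 1 N,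
          |rhoFGN H ((k : ℤ) - (l : ℤ))| ^ r *
          |rhoFGN H ((k : ℤ) - 1)| ^ (p - r) *
          |rhoFGN H ((l : ℤ) - 1)| ^ (p - r)
      ≤ C * ((N : ℝ) ^ (-1 : ℝ) + (N : ℝ) ^ (2 * H - 2)) := by
  obtain ⟨hH0, hHp⟩ := hH
  have hp0 : (0 : ℝ) < 2 * p := by positivity
  have hH1 : H < 1 := hHp.trans_le (by linarith [one_div_pos.mpr hp0])
  obtain ⟨u, c, hu, hu1, hρ⟩ := exists_abs_rhoFGN_le hH0 hH1
  have hpu : 1 < p * u := by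
    have := (div_lt_iff₀ hp0).mp (by linarith : 1 / (2 * (p : ℝ)) < 1 - H)
    nlinarith
  obtain ⟨C, hC, hbound⟩ := exists_sum_abs_pow_mul_le (by linarith) hu1 hρ hpu (by omega : r < p)
  refine ⟨C, hC, fun N hN => ?_⟩
  have hN1 : (1 : ℝ) ≤ N := by exact_mod_cast hN
  have hN0 : (0 : ℝ) < N := by linarith
  calc _ ≤ 1 / (N : ℝ) * (C * (1 + (N : ℝ) ^ (1 - u))) :=
        mul_le_mul_of_nonneg_left (hbound N hN) (by positivity)
    _ = C * ((N : ℝ) ^ (-1 : ℝ) + (N : ℝ) ^ (-u)) := by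
        rw [rpow_neg_one, rpow_neg hN0.le, rpow_sub hN0, rpow_one]
        field_simp
    _ ≤ C * ((N : ℝ) ^ (-1 : ℝ) + (N : ℝ) ^ (2 * H - 2)) := by
        gcongr
        linarith
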